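/- arXiv:2106.06260 — 8 statements merged into one kernel-verified Lean document; each statement's English description precedes it below -/
import Mathlib

section
/- A vertical vector lies in ⋂_{α=1}^k Ker ω^α if and only if it lies in the kernel of the Legendre differential; precisely, (⋂_{α=1}^k Ker ω^α) ∩ W = Ker Λ, where W = {0} × (Fin k → ℝ^n) is the vertical subspace. (Pointwise content of the Lemma: [𝔛^k(T^1_kQ)]^⊥ ∩ 𝔛^V(T^1_kQ) = Ker 𝓕𝓛_*.) -/
open Finset

theorem cartanForm_vertical_left {R ι κ : Type*} [CommRing R] [Fintype ι] [Fintype κ]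
    (A : ι → ι → R) (H : ι → κ → ι → R) (w : κ → ι → R) (u' : ι → R) (w' : κ → ι → R) :
    (∑ i, ∑ j, A i j * ((0 : ι → R) i * u' j - u' i * (0 : ι → R) j)) +
      (∑ β, ∑ i, ∑ j, H i β j * ((0 : ι → R) i * w' β j - u' i * w β j)) =
      -((fun i => ∑ β, ∑ j, H i β j * w β j) ⬝ᵥ u') := by
  simp only [Pi.zero_apply, zero_mul, mul_zero, sub_self, sum_const_zero, zero_sub, zero_add,
    mul_neg, sum_neg_distrib, dotProduct, sum_mul]
  rw [sum_comm]
  exact congrArg _ (sum_congr rfl fun i _ => sum_congr rfl fun β _ =>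
    sum_congr rfl fun j _ => by ring)

theorem stmt1_general {k n : ℕ}
    (A : Fin k → Fin n → Fin n → ℝ)
    (H : Fin k → Fin n → Fin k → Fin n → ℝ)
    (ω : Fin k → ((Fin n → ℝ) × (Fin k → Fin n → ℝ)) →
        ((Fin n → ℝ) × (Fin k → Fin n → ℝ)) → ℝ)
    (hω : ∀ α u w u' w', ω α (u, w) (u', w') =
      (∑ i, ∑ j, A α i j * (u i * u' j - u' i * u j)) +
      (∑ β, ∑ i, ∑ j, H α i β j * (u i * w' β j - u' i * w β j)))
    (Λ : ((Fin n → ℝ) × (Fin k → Fin n → ℝ)) → ((Fin n → ℝ) × (Fin k → Fin n → ℝ)))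
    (hΛ : ∀ u w, Λ (u, w) =
      (u, fun α i => (∑ j, A α i j * u j) + ∑ β, ∑ j, H α i β j * w β j))
    (Z : (Fin n → ℝ) × (Fin k → Fin n → ℝ)) :
    ((∀ α Y, ω α Z Y = 0) ∧ Z.1 = 0) ↔ Λ Z = 0 := by
  obtain ⟨u, w⟩ := Z
  rw [hΛ, Prod.mk_eq_zero, and_comm]
  refine and_congr_right fun (hu : u = 0) => ?_
  subst hu
  simp only [Pi.zero_apply, mul_zero, sum_const_zero, zero_add, funext_iff]
  refine forall_congr' fun α => ?_
  simp only [Prod.forall, hω, cartanForm_vertical_left, neg_eq_zero, forall_const]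
  exact dotProduct_eq_zero_iff.trans funext_iff

/-- Pointwise content of the Lemma
`[𝔛^k(T^1_kQ)]^⊥ ∩ 𝔛^V(T^1_kQ) = Ker 𝓕𝓛_*`:
a vertical vector lies in `⋂_{α=1}^k Ker ω^α` iff it lies in the kernel of the
Legendre differential. -/
theorem stmt1 {k n : ℕ} (hk : 1 ≤ k) (hn : 1 ≤ n)
    (A : Fin k → Fin n → Fin n → ℝ)
    (H : Fin k → Fin n → Fin k → Fin n → ℝ)
    (hH : ∀ α i β j, H α i β j = H β j α i)
    (ω : Fin k → ((Fin n → ℝ) × (Fin k → Fin n → ℝ)) →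
        ((Fin n → ℝ) × (Fin k → Fin n → ℝ)) → ℝ)
    (hω : ∀ α u w u' w', ω α (u, w) (u', w') =
      (∑ i, ∑ j, A α i j * (u i * u' j - u' i * u j)) +
      (∑ β, ∑ i, ∑ j, H α i β j * (u i * w' β j - u' i * w β j)))
    (Λ : ((Fin n → ℝ) × (Fin k → Fin n → ℝ)) → ((Fin n → ℝ) × (Fin k → Fin n → ℝ)))
    (hΛ : ∀ u w, Λ (u, w) =
      (u, fun α i => (∑ j, A α i j * u j) + ∑ β, ∑ j, H α i β j * w β j))
    (Z : (Fin n → ℝ) × (Fin k → Fin n → ℝ)) :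
    ((∀ α Y, ω α Z Y = 0) ∧ Z.1 = 0) ↔ Λ Z = 0 :=
  stmt1_general A H ω hω Λ hΛ Z
end

section
/- Let W ⊆ V be a subspace and 𝔐 = {Z ∈ V : Ω(U)(Z) = 0 for every k-tuple U ∈ W^k all of whose components lie in W}. If Y ∈ V^k satisfies Ω(Y)(Z) = 0 for all Z ∈ 𝔐, then there exists U ∈ W^k with Ω(Y) = Ω(U), i.e. Y − U ∈ Ker Ω. (Pointwise content of the Lemma: if 𝐘 ∈ 𝔐^⊥ then there exists a vertical k-vector field 𝐕 with 𝐘 − 𝐕 ∈ Ker Ω_𝓛.) -/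
/-!
`𝔐` is the subspace of `V` annihilated by the image `Ω(W^k) ⊆ V*`, so the hypothesis says that
`Ω(Y)` annihilates the annihilator of `Ω(W^k)`. In finite dimension a subspace of `V*` is the
annihilator of its own annihilator in `V`, hence `Ω(Y) ∈ Ω(W^k)`.
-/

open Module

theorem Subspace.mem_of_dualCoannihilator_le_ker {K V : Type*} [Field K] [AddCommGroup V]
    [Module K V] {S : Subspace K (Dual K V)} [FiniteDimensional K S] {φ : Dual K V}
    (h : S.dualCoannihilator ≤ LinearMap.ker φ) : φ ∈ S := by
  rw [← Subspace.dualCoannihilator_dualAnnihilator_eq (W := S)]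
  exact (Submodule.mem_dualAnnihilator φ).2 fun _ hv => h hv

/-- The map `Ω(X) = ∑ α, ω α (X α)` of the informal statement. -/
def cartanMap {K V ι : Type*} [CommSemiring K] [AddCommMonoid V] [Module K V] [Fintype ι]
    (ω : ι → V →ₗ[K] V →ₗ[K] K) : (ι → V) →ₗ[K] Dual K V :=
  ∑ α, (ω α).comp (LinearMap.proj α)

@[simp]
theorem cartanMap_apply {K V ι : Type*} [CommSemiring K] [AddCommMonoid V] [Module K V]
    [Fintype ι] (ω : ι → V →ₗ[K] V →ₗ[K] K) (X : ι → V) (Z : V) :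
    cartanMap ω X Z = ∑ α, ω α (X α) Z := by
  simp [cartanMap]

theorem stmt3_general {k : ℕ} (V : Type*) [AddCommGroup V] [Module ℝ V]
    [FiniteDimensional ℝ V]
    (ω : Fin k → (V →ₗ[ℝ] V →ₗ[ℝ] ℝ))
    (W : Submodule ℝ V)
    (Y : Fin k → V)
    (hY : ∀ Z : V,
      (∀ U : Fin k → V, (∀ α, U α ∈ W) → (∑ α, ω α (U α) Z) = 0) →
      (∑ α, ω α (Y α) Z) = 0) :
    ∃ U : Fin k → V, (∀ α, U α ∈ W) ∧
      ∀ Z : V, (∑ α, ω α (Y α) Z) = (∑ α, ω α (U α) Z) := by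
  obtain ⟨U, hU, hUY⟩ :
      cartanMap ω Y ∈ (Submodule.pi Set.univ fun _ => W).map (cartanMap ω) := by
    refine Subspace.mem_of_dualCoannihilator_le_ker fun Z hZ => ?_
    rw [Submodule.mem_dualCoannihilator] at hZ
    simpa using hY Z fun U hU =>
      by simpa using hZ _ (Submodule.mem_map_of_mem (Submodule.mem_pi.2 fun α _ => hU α))
  refine ⟨U, fun α => Submodule.mem_pi.1 hU α trivial, fun Z => ?_⟩
  simpa using (LinearMap.congr_fun hUY Z).symm

/-- Pointwise content of the Lemma: if `𝐘 ∈ 𝔐^⊥` then there exists a vertical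
k-vector field `𝐕` with `𝐘 − 𝐕 ∈ Ker Ω_𝓛`. Here `W ⊆ V` is a subspace and
`𝔐 = {Z ∈ V : Ω(U)(Z) = 0 for every k-tuple U with components in W}`. -/
theorem stmt3 {k : ℕ} (hk : 1 ≤ k) (V : Type*) [AddCommGroup V] [Module ℝ V]
    [FiniteDimensional ℝ V]
    (ω : Fin k → (V →ₗ[ℝ] V →ₗ[ℝ] ℝ))
    (halt : ∀ α, ∀ z : V, ω α z z = 0)
    (W : Submodule ℝ V)
    (Y : Fin k → V)
    (hY : ∀ Z : V,
      (∀ U : Fin k → V, (∀ α, U α ∈ W) → (∑ α, ω α (U α) Z) = 0) →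
      (∑ α, ω α (Y α) Z) = 0) :
    ∃ U : Fin k → V, (∀ α, U α ∈ W) ∧
      ∀ Z : V, (∑ α, ω α (Y α) Z) = (∑ α, ω α (U α) Z) :=
  stmt3_general V ω W Y hY
end

section
/- Let β ∈ V*, let X ∈ V^k satisfy Ω(X) = β, and let Y ∈ V^k be such that X + Y is a SOPDE-tuple at velocities v. Then there exists Y' ∈ V^k with Ω(Y') = 0 such that X + Y' is a SOPDE-tuple at velocities v, if and only if Ω(Y)(Z) = 0 for every Z ∈ 𝔐. (Pointwise content of the Theorem characterizing the submanifold S_1 where SOPDE solutions of the k-presymplectic Lagrangian equation exist.) -/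
/-!
The tuples `Y'` making `X + Y'` a SOPDE-tuple are exactly the `Y - U` with `U ∈ Wᵏ`, so a
correction in `ker Ω` exists iff `Ω(Y) ∈ Ω(Wᵏ)`. In finite dimension a subspace of `V*` is the
annihilator of its coannihilator, and the coannihilator of `Ω(Wᵏ)` is `𝔐`.
-/

open Module

theorem Module.Dual.mem_range_iff_forall_apply_eq_zero {K V M : Type*} [Field K]
    [AddCommGroup V] [Module K V] [FiniteDimensional K V] [AddCommGroup M] [Module K M]
    (L : M →ₗ[K] Dual K V) (f : Dual K V) :
    f ∈ LinearMap.range L ↔ ∀ z, (∀ m, L m z = 0) → f z = 0 := by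
  rw [← Subspace.dualCoannihilator_dualAnnihilator_eq (W := LinearMap.range L),
    Submodule.mem_dualAnnihilator]
  simp only [Submodule.mem_dualCoannihilator, LinearMap.mem_range, forall_exists_index,
    forall_apply_eq_imp_iff]

section SumPairing

variable {K V ι : Type*} [Field K] [AddCommGroup V] [Module K V] [Fintype ι]

/-- The map `X ↦ Ω(X)` of the paper. -/
def sumPairing (ω : ι → V →ₗ[K] V →ₗ[K] K) : (ι → V) →ₗ[K] Dual K V :=
  ∑ α, ω α ∘ₗ LinearMap.proj α

theorem sumPairing_apply (ω : ι → V →ₗ[K] V →ₗ[K] K) (X : ι → V) (z : V) :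
    sumPairing ω X z = ∑ α, ω α (X α) z := by
  simp [sumPairing]

theorem exists_sumPairing_eq_zero_and_sub_mem_iff [FiniteDimensional K V]
    (ω : ι → V →ₗ[K] V →ₗ[K] K) (W : Submodule K V) (Y : ι → V) :
    (∃ Y', sumPairing ω Y' = 0 ∧ ∀ α, Y α - Y' α ∈ W) ↔
      ∀ z, (∀ U : ι → V, (∀ α, U α ∈ W) → sumPairing ω U z = 0) → sumPairing ω Y z = 0 := by
  let Wι := Submodule.pi Set.univ fun _ : ι ↦ W
  have hWι (U : ι → V) : U ∈ Wι ↔ ∀ α, U α ∈ W := by simp [Wι]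
  have hrange : (∃ Y', sumPairing ω Y' = 0 ∧ ∀ α, Y α - Y' α ∈ W) ↔
      sumPairing ω Y ∈ LinearMap.range (sumPairing ω ∘ₗ Wι.subtype) := by
    constructor
    · rintro ⟨Y', hY', hsub⟩
      refine ⟨⟨Y - Y', (hWι _).2 hsub⟩, ?_⟩
      simp [hY']
    · rintro ⟨⟨U, hU⟩, hUY⟩
      refine ⟨Y - U, ?_, fun α ↦ by simpa using (hWι U).1 hU α⟩
      simpa [sub_eq_zero] using hUY.symm
  rw [hrange, Dual.mem_range_iff_forall_apply_eq_zero]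
  simp [hWι]

end SumPairing

theorem stmt4_general {k n : ℕ}
    (ω : Fin k → ((Fin n → ℝ) × (Fin k → Fin n → ℝ)) →ₗ[ℝ]
        ((Fin n → ℝ) × (Fin k → Fin n → ℝ)) →ₗ[ℝ] ℝ)
    (v : Fin k → Fin n → ℝ)
    (X Y : Fin k → (Fin n → ℝ) × (Fin k → Fin n → ℝ))
    (hXY : ∀ α, (X α + Y α).1 = v α) :
    (∃ Y' : Fin k → (Fin n → ℝ) × (Fin k → Fin n → ℝ),
        (∀ Z, (∑ α, ω α (Y' α) Z) = 0) ∧ ∀ α, (X α + Y' α).1 = v α) ↔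
    (∀ Z : (Fin n → ℝ) × (Fin k → Fin n → ℝ),
      (∀ U : Fin k → (Fin n → ℝ) × (Fin k → Fin n → ℝ),
        (∀ α, (U α).1 = 0) → (∑ α, ω α (U α) Z) = 0) →
      (∑ α, ω α (Y α) Z) = 0) := by
  have hsopde (Y' : Fin k → (Fin n → ℝ) × (Fin k → Fin n → ℝ)) :
      (∀ α, (X α + Y' α).1 = v α) ↔ ∀ α, (Y α - Y' α).1 = 0 := by
    refine forall_congr' fun α ↦ ?_
    rw [← hXY α, Prod.fst_add, Prod.fst_add, Prod.fst_sub, add_right_inj, sub_eq_zero, eq_comm]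
  have key := exists_sumPairing_eq_zero_and_sub_mem_iff ω (LinearMap.ker (LinearMap.fst ℝ _ _)) Y
  simp only [LinearMap.mem_ker, LinearMap.fst_apply, LinearMap.ext_iff, sumPairing_apply,
    LinearMap.zero_apply] at key
  simpa only [hsopde] using key

/-- Pointwise content of the Theorem characterizing the submanifold `S_1`
where SOPDE solutions of the k-presymplectic Lagrangian equation exist:
given `Ω(X) = β` and `X + Y` a SOPDE-tuple at velocities `v`, there is
`Y' ∈ Ker Ω` with `X + Y'` a SOPDE-tuple at `v` iff `Ω(Y)` vanishes on `𝔐`. -/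
theorem stmt4 {k n : ℕ} (hk : 1 ≤ k) (hn : 1 ≤ n)
    (ω : Fin k → ((Fin n → ℝ) × (Fin k → Fin n → ℝ)) →ₗ[ℝ]
        ((Fin n → ℝ) × (Fin k → Fin n → ℝ)) →ₗ[ℝ] ℝ)
    (halt : ∀ α z, ω α z z = 0)
    (v : Fin k → Fin n → ℝ)
    (β : ((Fin n → ℝ) × (Fin k → Fin n → ℝ)) →ₗ[ℝ] ℝ)
    (X Y : Fin k → (Fin n → ℝ) × (Fin k → Fin n → ℝ))
    (hX : ∀ Z, (∑ α, ω α (X α) Z) = β Z)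
    (hXY : ∀ α, (X α + Y α).1 = v α) :
    (∃ Y' : Fin k → (Fin n → ℝ) × (Fin k → Fin n → ℝ),
        (∀ Z, (∑ α, ω α (Y' α) Z) = 0) ∧ ∀ α, (X α + Y' α).1 = v α) ↔
    (∀ Z : (Fin n → ℝ) × (Fin k → Fin n → ℝ),
      (∀ U : Fin k → (Fin n → ℝ) × (Fin k → Fin n → ℝ),
        (∀ α, (U α).1 = 0) → (∑ α, ω α (U α) Z) = 0) →
      (∑ α, ω α (Y α) Z) = 0) :=
  stmt4_general ω v X Y hXY
end

section
/- Let β ∈ V* and let Γ ∈ V^k be any SOPDE-tuple at velocities v. Then Ω(Γ)(Z) = β(Z) for every Z ∈ 𝔐 if and only if there exists a SOPDE-tuple Γ' at velocities v with Ω(Γ') = β. (Pointwise content of the Proposition giving the alternative characterization S_1 = {x : i(Z)(Ω_𝓛(𝚪) − dE_𝓛)(x) = 0 for all Z ∈ 𝔐}.) -/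
/-!
SOPDE-tuples at `v` form the affine space `Γ + Wᵏ`, and `Ω` is linear, so the question is whether
`β - Ω(Γ)` lies in the subspace `Ω(Wᵏ)` of `V*`. By definition `𝔐` is the coannihilator of
`Ω(Wᵏ)`, and in finite dimensions a subspace of `V*` is the annihilator of its coannihilator.
-/

open Module

theorem Submodule.exists_sub_mem_map_eq_iff_eqOn_dualCoannihilator
    {K V E : Type*} [Field K] [AddCommGroup V] [Module K V] [AddCommGroup E] [Module K E]
    [FiniteDimensional K E] (Ω : E →ₗ[K] Dual K V) (P : Submodule K E) (x : E) (β : Dual K V) :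
    (∀ Z ∈ (P.map Ω).dualCoannihilator, Ω x Z = β Z) ↔ ∃ x', x' - x ∈ P ∧ Ω x' = β := by
  constructor
  · intro h
    have hmem : β - Ω x ∈ (P.map Ω).dualCoannihilator.dualAnnihilator := by
      rw [Submodule.mem_dualAnnihilator]
      intro Z hZ
      simp [h Z hZ]
    rw [Subspace.dualCoannihilator_dualAnnihilator_eq] at hmem
    obtain ⟨p, hp, hΩp⟩ := hmem
    exact ⟨x + p, by simpa using hp, by simp [hΩp]⟩
  · rintro ⟨x', hx', rfl⟩ Z hZ
    have h := (Submodule.mem_dualCoannihilator Z).1 hZ _ (Submodule.mem_map_of_mem hx')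
    rw [map_sub, LinearMap.sub_apply, sub_eq_zero] at h
    exact h.symm

theorem stmt6_general {k n : ℕ}
    (ω : Fin k → ((Fin n → ℝ) × (Fin k → Fin n → ℝ)) →ₗ[ℝ]
        ((Fin n → ℝ) × (Fin k → Fin n → ℝ)) →ₗ[ℝ] ℝ)
    (v : Fin k → Fin n → ℝ)
    (β : ((Fin n → ℝ) × (Fin k → Fin n → ℝ)) →ₗ[ℝ] ℝ)
    (Γ : Fin k → (Fin n → ℝ) × (Fin k → Fin n → ℝ))
    (hΓsopde : ∀ α, (Γ α).1 = v α) :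
    (∀ Z : (Fin n → ℝ) × (Fin k → Fin n → ℝ),
      (∀ U : Fin k → (Fin n → ℝ) × (Fin k → Fin n → ℝ),
        (∀ α, (U α).1 = 0) → (∑ α, ω α (U α) Z) = 0) →
      (∑ α, ω α (Γ α) Z) = β Z) ↔
    (∃ Γ' : Fin k → (Fin n → ℝ) × (Fin k → Fin n → ℝ),
      (∀ α, (Γ' α).1 = v α) ∧ ∀ Z, (∑ α, ω α (Γ' α) Z) = β Z) := by
  set Ω := LinearMap.lsum ℝ (fun _ : Fin k => (Fin n → ℝ) × (Fin k → Fin n → ℝ)) ℝ ω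
  have Ω_apply (X : Fin k → (Fin n → ℝ) × (Fin k → Fin n → ℝ)) (Z) :
      Ω X Z = ∑ α, ω α (X α) Z := by
    simp [Ω, LinearMap.sum_apply]
  set vertical : Submodule ℝ (Fin k → (Fin n → ℝ) × (Fin k → Fin n → ℝ)) :=
    Submodule.pi Set.univ fun _ => LinearMap.ker (LinearMap.fst ℝ _ _)
  have mem_vertical (U) : U ∈ vertical ↔ ∀ α, (U α).1 = 0 := by simp [vertical]
  have mem_𝔐 (Z) : Z ∈ (vertical.map Ω).dualCoannihilator ↔
      ∀ U : Fin k → (Fin n → ℝ) × (Fin k → Fin n → ℝ),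
        (∀ α, (U α).1 = 0) → (∑ α, ω α (U α) Z) = 0 := by
    simp [Submodule.mem_dualCoannihilator, mem_vertical, Ω_apply]
  have sub_mem_vertical (Γ') : Γ' - Γ ∈ vertical ↔ ∀ α, (Γ' α).1 = v α := by
    simp [mem_vertical, hΓsopde, sub_eq_zero]
  simpa only [mem_𝔐, sub_mem_vertical, LinearMap.ext_iff, Ω_apply] using
    vertical.exists_sub_mem_map_eq_iff_eqOn_dualCoannihilator Ω Γ β

/-- Pointwise content of the Proposition giving the alternative characterization
`S_1 = {x : i(Z)(Ω_𝓛(𝚪) − dE_𝓛)(x) = 0 for all Z ∈ 𝔐}`: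
for `β ∈ V*` and any SOPDE-tuple `Γ` at velocities `v`, `Ω(Γ)` agrees with `β`
on `𝔐` iff there exists a SOPDE-tuple `Γ'` at `v` with `Ω(Γ') = β`. -/
theorem stmt6 {k n : ℕ} (hk : 1 ≤ k) (hn : 1 ≤ n)
    (ω : Fin k → ((Fin n → ℝ) × (Fin k → Fin n → ℝ)) →ₗ[ℝ]
        ((Fin n → ℝ) × (Fin k → Fin n → ℝ)) →ₗ[ℝ] ℝ)
    (halt : ∀ α z, ω α z z = 0)
    (v : Fin k → Fin n → ℝ)
    (β : ((Fin n → ℝ) × (Fin k → Fin n → ℝ)) →ₗ[ℝ] ℝ)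
    (Γ : Fin k → (Fin n → ℝ) × (Fin k → Fin n → ℝ))
    (hΓsopde : ∀ α, (Γ α).1 = v α) :
    (∀ Z : (Fin n → ℝ) × (Fin k → Fin n → ℝ),
      (∀ U : Fin k → (Fin n → ℝ) × (Fin k → Fin n → ℝ),
        (∀ α, (U α).1 = 0) → (∑ α, ω α (U α) Z) = 0) →
      (∑ α, ω α (Γ α) Z) = β Z) ↔
    (∃ Γ' : Fin k → (Fin n → ℝ) × (Fin k → Fin n → ℝ),
      (∀ α, (Γ' α).1 = v α) ∧ ∀ Z, (∑ α, ω α (Γ' α) Z) = β Z) :=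
  stmt6_general ω v β Γ hΓsopde
end

section
/- Let X be a k-vector field on ℝ^n × (Fin k → ℝ^n) satisfying the SOPDE condition, and let φ = (ψ, χ) : ℝ^k → ℝ^n × (Fin k → ℝ^n) be a differentiable integral section of X. Then (a) χ(t)_α = ∂ψ/∂t^α(t) for every α and every t ∈ ℝ^k (so φ is the canonical prolongation of ψ, i.e. φ is holonomic), and (b) the mixed second partial derivatives of ψ exist with ∂²ψ/∂t^α∂t^β(t) equal to the β-th component of the vertical part of X_α(φ(t)) for all α, β, t. (The paper's equations (nn): integral sections of SOPDEs are holonomic and solve second-order PDEs.) -/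
/-!
Along an integral section `φ = (ψ, χ)`, the first component of `∂φ/∂t^α` is `∂ψ/∂t^α`, while
the SOPDE condition makes it `χ_α`; so `χ` is the first prolongation of `ψ`. The first partials
of `ψ` are therefore the components of `χ`, which are differentiable, and differentiating
`χ_β` in the direction `t^α` reads off the vertical part of `X_α`.
-/

open ContinuousLinearMap

variable {𝕜 E F ι : Type*} [NontriviallyNormedField 𝕜] [NormedAddCommGroup E] [NormedSpace 𝕜 E]
  [NormedAddCommGroup F] [NormedSpace 𝕜 F] [Fintype ι]

def IsSOPDE (X : ι → F × (ι → F) → F × (ι → F)) : Prop :=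
  ∀ α q v, (X α (q, v)).1 = v α

variable (𝕜) in
/-- `e α` plays the role of the coordinate direction `∂/∂t^α` of the parameter space. -/
def IsIntegralSection (X : ι → F × (ι → F) → F × (ι → F)) (e : ι → E)
    (φ : E → F × (ι → F)) : Prop :=
  ∀ t α, fderiv 𝕜 φ t (e α) = X α (φ t)

namespace IsIntegralSection

variable {X : ι → F × (ι → F) → F × (ι → F)} {e : ι → E} {φ : E → F × (ι → F)}

theorem snd_eq_fderiv_fst (hφ : IsIntegralSection 𝕜 X e φ) (hX : IsSOPDE X) {t : E}
    (hd : DifferentiableAt 𝕜 φ t) (α : ι) :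
    (φ t).2 α = fderiv 𝕜 (fun s => (φ s).1) t (e α) := by
  rw [fderiv.fst hd, comp_apply, coe_fst', hφ t α]
  exact (hX α (φ t).1 (φ t).2).symm

theorem fderiv_fst_apply_eq_snd (hφ : IsIntegralSection 𝕜 X e φ) (hX : IsSOPDE X)
    (hd : Differentiable 𝕜 φ) (β : ι) :
    (fun s => fderiv 𝕜 (fun r => (φ r).1) s (e β)) = fun s => (φ s).2 β :=
  funext fun s => (hφ.snd_eq_fderiv_fst hX (hd s) β).symm

theorem fderiv_snd_apply (hφ : IsIntegralSection 𝕜 X e φ) {t : E}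
    (hd : DifferentiableAt 𝕜 φ t) (α β : ι) :
    fderiv 𝕜 (fun s => (φ s).2 β) t (e α) = (X α (φ t)).2 β := by
  rw [fderiv_apply hd.snd β, fderiv.snd hd]
  simp [hφ t α]

end IsIntegralSection

theorem stmt8_general {k n : ℕ}
    (X : Fin k → ((Fin n → ℝ) × (Fin k → Fin n → ℝ)) →
        ((Fin n → ℝ) × (Fin k → Fin n → ℝ)))
    (hsopde : ∀ α q v, (X α (q, v)).1 = v α)
    (φ : (Fin k → ℝ) → (Fin n → ℝ) × (Fin k → Fin n → ℝ))
    (hφ : Differentiable ℝ φ)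
    (hint : ∀ t α, fderiv ℝ φ t (Pi.single α 1) = X α (φ t)) :
    (∀ t α, (φ t).2 α = fderiv ℝ (fun s => (φ s).1) t (Pi.single α 1)) ∧
    (∀ t α β,
      DifferentiableAt ℝ
        (fun s => fderiv ℝ (fun r => (φ r).1) s (Pi.single β 1)) t ∧
      fderiv ℝ (fun s => fderiv ℝ (fun r => (φ r).1) s (Pi.single β 1)) t
          (Pi.single α 1) = (X α (φ t)).2 β) := by
  have hX : IsSOPDE X := hsopde
  have hI : IsIntegralSection ℝ X (fun α => Pi.single α 1) φ := hint
  refine ⟨fun t α => hI.snd_eq_fderiv_fst hX (hφ t) α, fun t α β => ?_⟩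
  rw [hI.fderiv_fst_apply_eq_snd hX hφ β]
  exact ⟨differentiableAt_pi.1 (hφ t).snd β, hI.fderiv_snd_apply (hφ t) α β⟩

/-- The paper's equations (nn): integral sections of SOPDEs are holonomic and
solve second-order PDEs. If `X` is a SOPDE k-vector field on
`ℝ^n × (Fin k → ℝ^n)` and `φ = (ψ, χ)` is a differentiable integral section,
then (a) `χ(t)_α = ∂ψ/∂t^α(t)`, and (b) the mixed second partials of `ψ` exist,
with `∂²ψ/∂t^α∂t^β(t)` equal to the `β`-component of the vertical part of
`X_α(φ(t))`. -/
theorem stmt8 {k n : ℕ} (hk : 1 ≤ k) (hn : 1 ≤ n)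
    (X : Fin k → ((Fin n → ℝ) × (Fin k → Fin n → ℝ)) →
        ((Fin n → ℝ) × (Fin k → Fin n → ℝ)))
    (hsopde : ∀ α q v, (X α (q, v)).1 = v α)
    (φ : (Fin k → ℝ) → (Fin n → ℝ) × (Fin k → Fin n → ℝ))
    (hφ : Differentiable ℝ φ)
    (hint : ∀ t α, fderiv ℝ φ t (Pi.single α 1) = X α (φ t)) :
    (∀ t α, (φ t).2 α = fderiv ℝ (fun s => (φ s).1) t (Pi.single α 1)) ∧
    (∀ t α β,
      DifferentiableAt ℝ
        (fun s => fderiv ℝ (fun r => (φ r).1) s (Pi.single β 1)) t ∧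
      fderiv ℝ (fun s => fderiv ℝ (fun r => (φ r).1) s (Pi.single β 1)) t
          (Pi.single α 1) = (X α (φ t)).2 β) :=
  stmt8_general X hsopde φ hφ hint
end

section
/- For an affine Lagrangian, at a point (q, v) the k-presymplectic Lagrangian equation Ω(X) = dE_L (with dE_L the covector (u', w') ↦ −Σ_j ∂G/∂q^j(q) u'^j) holds for X ∈ V^k with horizontal components x_α if and only if Σ_{α=1}^k Σ_i x_α^i M^α_{ij}(q) + ∂G/∂q^j(q) = 0 for every j. In particular, a SOPDE-tuple at velocities v solves the equation if and only if Σ_{α=1}^k Σ_i v_α^i M^α_{ij}(q) + ∂G/∂q^j(q) = 0 for every j (the SOPDE constraints η^j_1, showing that for affine Lagrangians the field equations are recovered as constraints). -/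
/-- For an affine Lagrangian, at a point `(q,v)` the k-presymplectic Lagrangian
equation `Ω(X) = dE_L` holds iff `Σ_{α,i} x_α^i M^α_{ij}(q) + ∂G/∂q^j(q) = 0`
for every `j`; in particular a SOPDE-tuple at velocities `v` solves it iff
`Σ_{α,i} v_α^i M^α_{ij}(q) + ∂G/∂q^j(q) = 0` for every `j` (the SOPDE
constraints `η^j_1`). -/
theorem stmt13 {k n : ℕ} (hk : 1 ≤ k) (hn : 1 ≤ n)
    (F : (Fin n → ℝ) → Fin k → Fin n → ℝ) (G : (Fin n → ℝ) → ℝ)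
    (hF : ∀ α i, ContDiff ℝ (⊤ : ℕ∞) fun q => F q α i) (hG : ContDiff ℝ (⊤ : ℕ∞) G)
    (q : Fin n → ℝ) (v : Fin k → Fin n → ℝ)
    (M : Fin k → Fin n → Fin n → ℝ)
    (hM : ∀ α i j, M α i j =
      fderiv ℝ (fun q' => F q' α i) q (Pi.single j 1) -
      fderiv ℝ (fun q' => F q' α j) q (Pi.single i 1))
    (ω : Fin k → ((Fin n → ℝ) × (Fin k → Fin n → ℝ)) →
        ((Fin n → ℝ) × (Fin k → Fin n → ℝ)) → ℝ)
    (hω : ∀ α u w u' w', ω α (u, w) (u', w') =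
      ∑ i, ∑ j, M α i j * (u i * u' j))
    (dE : ((Fin n → ℝ) × (Fin k → Fin n → ℝ)) → ℝ)
    (hdE : ∀ u' w', dE (u', w') =
      -∑ j, fderiv ℝ G q (Pi.single j 1) * u' j) :
    (∀ X : Fin k → (Fin n → ℝ) × (Fin k → Fin n → ℝ),
      (∀ Z, (∑ α, ω α (X α) Z) = dE Z) ↔
      (∀ j, (∑ α, ∑ i, (X α).1 i * M α i j) +
        fderiv ℝ G q (Pi.single j 1) = 0)) ∧
    (∀ X : Fin k → (Fin n → ℝ) × (Fin k → Fin n → ℝ),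
      (∀ α, (X α).1 = v α) →
      ((∀ Z, (∑ α, ω α (X α) Z) = dE Z) ↔
        (∀ j, (∑ α, ∑ i, v α i * M α i j) +
          fderiv ℝ G q (Pi.single j 1) = 0))) := by
  set g : Fin n → ℝ := fun j => fderiv ℝ G q (Pi.single j 1) with hg
  have e : ∀ α (Z : (Fin n → ℝ) × (Fin k → Fin n → ℝ)) (X : Fin k → (Fin n → ℝ) × (Fin k → Fin n → ℝ)),
      ω α (X α) Z = ∑ i, ∑ j, M α i j * ((X α).1 i * Z.1 j) := by
    intro α Z X
    exact hω α (X α).1 (X α).2 Z.1 Z.2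
  have key : ∀ X : Fin k → (Fin n → ℝ) × (Fin k → Fin n → ℝ),
      (∀ Z, (∑ α, ω α (X α) Z) = dE Z) ↔
      (∀ j, (∑ α, ∑ i, (X α).1 i * M α i j) + g j = 0) := by
    intro X
    constructor
    · intro h j
      have h1 := h (Pi.single j 1, fun _ _ => 0)
      rw [hdE] at h1
      simp only [e, Pi.single_apply, mul_ite, mul_one, mul_zero,
        Finset.sum_ite_eq', Finset.mem_univ, if_true] at h1
      have : ∑ α, ∑ i, (X α).1 i * M α i j = -g j := by
        rw [← h1]
        refine Finset.sum_congr rfl fun α _ => Finset.sum_congr rfl fun i _ => by ring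
      rw [this]; ring
    · intro h Z
      obtain ⟨u', w'⟩ := Z
      rw [hdE]
      have h2 : ∀ j, ∑ α, ∑ i, (X α).1 i * M α i j = -g j := by
        intro j; have := h j; linarith
      calc ∑ α, ω α (X α) (u', w')
          = ∑ α, ∑ i, ∑ j, M α i j * ((X α).1 i * u' j) := by
            exact Finset.sum_congr rfl fun α _ => e α (u', w') X
        _ = ∑ α, ∑ j, ∑ i, M α i j * ((X α).1 i * u' j) :=
            Finset.sum_congr rfl fun α _ => Finset.sum_comm
        _ = ∑ j, ∑ α, ∑ i, M α i j * ((X α).1 i * u' j) := Finset.sum_comm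
        _ = ∑ j, (∑ α, ∑ i, (X α).1 i * M α i j) * u' j := by
            refine Finset.sum_congr rfl fun j _ => ?_
            rw [Finset.sum_mul]
            refine Finset.sum_congr rfl fun α _ => ?_
            rw [Finset.sum_mul]
            exact Finset.sum_congr rfl fun i _ => by ring
        _ = -∑ j, g j * u' j := by
            simp only [h2, neg_mul, Finset.sum_neg_distrib]
  refine ⟨key, fun X hX => (key X).trans ?_⟩
  simp only [hX]
  exact Iff.rfl
end

section
/- Let g be a symmetric invertible 4×4 real matrix and T : Fin 4 → Fin 4 → Fin 4 → ℝ with T^α_{βγ} = −T^α_{γβ}. Then the following are equivalent: (i) for all λ, ρ, ν: Σ_μ g_{λμ} T^μ_{ρν} − Σ_μ g_{ρμ} T^μ_{λν} + (1/3) g_{λν} Σ_μ T^μ_{μρ} − (1/3) g_{ρν} Σ_μ T^μ_{μλ} = 0; (ii) for all α, β, γ: T^α_{βγ} − (1/3) δ^α_β Σ_μ T^μ_{μγ} + (1/3) δ^α_γ Σ_μ T^μ_{μβ} = 0. (The paper's claim that the first-generation dynamical constraints of the Einstein–Palatini model can be written equivalently as the torsion constraints (ζ_1)^α_{βγ} =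 0.) -/
/-!
Lowering the upper index of `ζ_1` with `g` turns (i) into the symmetry of `ζ_{λρν}` in `λρ`
(the trace terms with `g_{λρ}` cancel because `g` is symmetric). A tensor symmetric in its first
two and antisymmetric in its last two indices vanishes, and since `g` is invertible, so does `ζ_1`.
-/

open Finset Matrix

variable {ι R M : Type*}

theorem eq_zero_of_symm_of_antisymm [AddGroup M] [IsAddTorsionFree M] {A : ι → ι → ι → M}
    (hs : ∀ a b c, A a b c = A b a c) (ha : ∀ a b c, A a b c = -A a c b) : A = 0 := by
  funext a b c
  -- Alternating the two symmetries around the six orderings of (a, b, c) returns to the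
  -- start with a sign change.
  have : A a b c = -A a b c :=
    calc A a b c = A b a c := hs a b c
      _ = -A b c a := ha b a c
      _ = -A c b a := by rw [hs b c a]
      _ = A c a b := by rw [ha c b a, neg_neg]
      _ = A a c b := hs c a b
      _ = -A a b c := ha a c b
  exact self_eq_neg.mp this

theorem symm_iff_eq_zero_of_antisymm [AddGroup M] [IsAddTorsionFree M] {A : ι → ι → ι → M}
    (ha : ∀ a b c, A a b c = -A a c b) : (∀ a b c, A a b c = A b a c) ↔ A = 0 :=
  ⟨fun hs => eq_zero_of_symm_of_antisymm hs ha, fun h => by simp [h]⟩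

variable [Fintype ι]

def torsionTrace [AddCommMonoid R] (T : ι → ι → ι → R) (c : ι) : R := ∑ m, T m m c

/-- The paper's `(ζ_1)^α_{βγ}`; in dimension four it is the traceless part of the torsion. -/
def zeta1 [Field R] [DecidableEq ι] (T : ι → ι → ι → R) (a b c : ι) : R :=
  T a b c - (1 / 3) * (if a = b then 1 else 0) * torsionTrace T c
    + (1 / 3) * (if a = c then 1 else 0) * torsionTrace T b

/-- `S_{λρν} = g_{λμ} S^μ_{ρν}`. -/
def lowerIndex [Semiring R] (g : Matrix ι ι R) (S : ι → ι → ι → R) (l r v : ι) : R :=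
  (g *ᵥ fun m => S m r v) l

theorem zeta1_antisymm [Field R] [DecidableEq ι] {T : ι → ι → ι → R}
    (hT : ∀ a b c, T a b c = -T a c b) (a b c : ι) :
    zeta1 T a b c = -zeta1 T a c b := by
  simp only [zeta1]
  rw [hT a b c]
  ring

theorem lowerIndex_antisymm [Ring R] (g : Matrix ι ι R) {S : ι → ι → ι → R}
    (hS : ∀ a b c, S a b c = -S a c b) (l r v : ι) :
    lowerIndex g S l r v = -lowerIndex g S l v r := by
  rw [lowerIndex, lowerIndex, ← Pi.neg_apply, ← mulVec_neg]
  exact congrArg (fun w => (g *ᵥ w) l) (funext fun m => hS m r v)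

theorem lowerIndex_eq_zero_iff [Semiring R] [DecidableEq ι] {g : Matrix ι ι R} (hg : IsUnit g)
    (S : ι → ι → ι → R) : lowerIndex g S = 0 ↔ S = 0 := by
  refine ⟨fun h => ?_, fun h => by subst h; funext l r v; simp [lowerIndex, mulVec, dotProduct]⟩
  funext a b c
  have hcol : (g *ᵥ fun m => S m b c) = g *ᵥ 0 := by
    rw [mulVec_zero]
    exact funext fun l => congrFun (congrFun (congrFun h l) b) c
  exact congrFun (mulVec_injective_of_isUnit hg hcol) a

section Field

variable [Field R] [DecidableEq ι]

theorem lowerIndex_zeta1 (g : Matrix ι ι R) (T : ι → ι → ι → R) (l r v : ι) :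
    lowerIndex g (zeta1 T) l r v = ∑ m, g l m * T m r v
      - (1 / 3) * g l r * torsionTrace T v + (1 / 3) * g l v * torsionTrace T r := by
  simp only [lowerIndex, zeta1, mulVec, dotProduct, mul_add, mul_sub, sum_add_distrib,
    sum_sub_distrib]
  simp [mul_left_comm (g l _), ← mul_assoc]

theorem lowerIndex_zeta1_sub_swap {g : Matrix ι ι R} (hg : ∀ i j, g i j = g j i)
    (T : ι → ι → ι → R) (l r v : ι) :
    lowerIndex g (zeta1 T) l r v - lowerIndex g (zeta1 T) r l v =
      (∑ m, g l m * T m r v) - (∑ m, g r m * T m l v)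
        + (1 / 3) * g l v * torsionTrace T r - (1 / 3) * g r v * torsionTrace T l := by
  rw [lowerIndex_zeta1, lowerIndex_zeta1, hg r l]
  ring

end Field

/-- The first-generation dynamical constraints of the Einstein–Palatini model
can be written equivalently as the torsion constraints `(ζ_1)^α_{βγ} = 0`. -/
theorem stmt14 (g : Matrix (Fin 4) (Fin 4) ℝ)
    (hsym : ∀ i j, g i j = g j i) (hinv : IsUnit g)
    (T : Fin 4 → Fin 4 → Fin 4 → ℝ)
    (hT : ∀ α β γ, T α β γ = -T α γ β) :
    (∀ l r ν,
      (∑ m, g l m * T m r ν) - (∑ m, g r m * T m l ν)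
        + (1 / 3) * g l ν * (∑ m, T m m r)
        - (1 / 3) * g r ν * (∑ m, T m m l) = 0) ↔
    (∀ a b c,
      T a b c - (1 / 3) * (if a = b then (1 : ℝ) else 0) * (∑ m, T m m c)
        + (1 / 3) * (if a = c then (1 : ℝ) else 0) * (∑ m, T m m b) = 0) :=
  calc _ ↔ ∀ l r ν, lowerIndex g (zeta1 T) l r ν = lowerIndex g (zeta1 T) r l ν := by
        simp only [← sub_eq_zero (a := lowerIndex _ _ _ _ _), lowerIndex_zeta1_sub_swap hsym,
          torsionTrace]
    _ ↔ lowerIndex g (zeta1 T) = 0 :=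
        symm_iff_eq_zero_of_antisymm (lowerIndex_antisymm g (zeta1_antisymm hT))
    _ ↔ zeta1 T = 0 := lowerIndex_eq_zero_iff hinv _
    _ ↔ _ := by simp only [funext_iff, Pi.zero_apply, zeta1, torsionTrace]
end

section
/- Let g be a symmetric invertible 4×4 real matrix with inverse entries g^{λσ}. Then every K : Fin 4 → Fin 4 → Fin 4 → ℝ satisfying Σ_α K^α_{αγ} = 0 for all γ and K^α_{βγ} + K^α_{γβ} = 0 for all α, β, γ, can be reconstructed from the tensors S: K^α_{βγ} = (1/2) Σ_{ν,σ,τ,λ,ρ} K^ν_{στ} g^{λσ} g^{ρτ} S^α_{βγ,λρν} for all α, β, γ. (The paper's claim that every such K is a linear combination of the S^α_{βγ,λρν}.) -/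
/-!
Raising the indices `λ, ρ` of `S^α_{βγ,λρν}` with `g⁻¹` turns every factor `g_{λx} g_{ρy}` into
`δ^σ_x δ^τ_y`, so the contracted tensor is `S` built from `δ` in place of `g`. Contracting it with
`K^ν_{στ}`, the terms with coefficient `1/3` become traces of `K` over its upper index and one lower
index, which vanish (for the second lower index by antisymmetry), and the last two terms give
`K^α_{βγ} - K^α_{γβ} = 2 K^α_{βγ}`.
-/

open Finset
open scoped Matrix

variable {ι R : Type*} [Fintype ι] [DecidableEq ι] [Field R]

-- `palatiniTensor g α β γ λ ρ ν` is `S^α_{βγ,λρν}`, with `δ` written as `(1 : Matrix ι ι R)`.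
def palatiniTensor (g : ι → ι → R) (a b c l r ν : ι) : R :=
  (1 / 3) * (1 : Matrix ι ι R) a c * g l ν * g r b
  - (1 / 3) * (1 : Matrix ι ι R) a c * g l b * g r ν
  + (1 / 3) * (1 : Matrix ι ι R) a b * g l c * g r ν
  - (1 / 3) * (1 : Matrix ι ι R) a b * g l ν * g r c
  + (1 : Matrix ι ι R) a ν * g l b * g r c
  - (1 : Matrix ι ι R) a ν * g l c * g r b

theorem Matrix.transpose_mul_eq_one_of_isSymm {n α : Type*} [Fintype n] [DecidableEq n]
    [CommRing α] {A B : Matrix n n α} (hB : B.IsSymm) (h : A * B = 1) : Aᵀ * B = 1 := by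
  rw [← hB.eq, ← Matrix.transpose_mul, mul_eq_one_comm.mp h, Matrix.transpose_one]

theorem sum_sum_mul_mul_of_transpose_mul_eq_one {g ginv : ι → ι → R}
    (h : (Matrix.of ginv)ᵀ * Matrix.of g = 1) (k : R) (σ τ x y : ι) :
    ∑ l, ∑ r, ginv l σ * ginv r τ * (k * g l x * g r y)
      = k * (1 : Matrix ι ι R) σ x * (1 : Matrix ι ι R) τ y := by
  rw [← h]
  simp only [Matrix.mul_apply, Matrix.transpose_apply, Matrix.of_apply, mul_sum, sum_mul]
  rw [sum_comm]
  exact sum_congr rfl fun l _ => sum_congr rfl fun r _ => by ring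

theorem sum_sum_mul_palatiniTensor {g ginv : ι → ι → R}
    (h : (Matrix.of ginv)ᵀ * Matrix.of g = 1) (k : R) (a b c σ τ ν : ι) :
    ∑ l, ∑ r, k * ginv l σ * ginv r τ * palatiniTensor g a b c l r ν
      = k * palatiniTensor (1 : Matrix ι ι R) a b c σ τ ν := by
  simp only [mul_assoc k, ← mul_sum]
  congr 1
  simp only [palatiniTensor, mul_add, mul_sub, sum_add_distrib, sum_sub_distrib,
    sum_sum_mul_mul_of_transpose_mul_eq_one h]

theorem sum_mul_palatiniTensor_one {K : ι → ι → ι → R} (htrace : ∀ c, ∑ a, K a a c = 0)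
    (hanti : ∀ a b c, K a b c + K a c b = 0) (a b c : ι) :
    ∑ ν, ∑ σ, ∑ τ, K ν σ τ * palatiniTensor (1 : Matrix ι ι R) a b c σ τ ν = 2 * K a b c := by
  have htrace' : ∀ b, ∑ a, K a b a = 0 := fun b => by
    simpa [eq_neg_of_add_eq_zero_left (hanti _ _ b)] using htrace b
  simp only [palatiniTensor, Matrix.one_apply, mul_add, mul_sub, sum_add_distrib, sum_sub_distrib,
    mul_ite, mul_zero, mul_one, sum_ite_eq, sum_ite_eq', mem_univ, if_true]
  simp only [sum_ite_irrel, ← sum_mul, htrace, htrace', zero_mul, ite_self,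
    sum_const_zero, add_zero, sub_zero, zero_add]
  linear_combination (-1 : R) * hanti a b c

/-- Every `K` with `Σ_α K^α_{αγ} = 0` and `K^α_{βγ} + K^α_{γβ} = 0` is a linear
combination of the tensors `S^α_{βγ,λρν}` of the Einstein–Palatini model:
`K^α_{βγ} = (1/2) K^ν_{στ} g^{λσ} g^{ρτ} S^α_{βγ,λρν}`. -/
theorem stmt16 (g ginv : Fin 4 → Fin 4 → ℝ)
    (hsym : ∀ i j, g i j = g j i)
    (hinv : ∀ a c, (∑ b, ginv a b * g b c) = if a = c then (1 : ℝ) else 0)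
    (S : Fin 4 → Fin 4 → Fin 4 → Fin 4 → Fin 4 → Fin 4 → ℝ)
    (hS : ∀ a b c l r ν, S a b c l r ν =
      (1 / 3) * g l ν * g r b * (if a = c then (1 : ℝ) else 0)
      - (1 / 3) * g r ν * g l b * (if a = c then (1 : ℝ) else 0)
      + (1 / 3) * g r ν * g l c * (if a = b then (1 : ℝ) else 0)
      - (1 / 3) * g l ν * g r c * (if a = b then (1 : ℝ) else 0)
      + g l b * g r c * (if a = ν then (1 : ℝ) else 0)
      - g r b * g l c * (if a = ν then (1 : ℝ) else 0))
    (K : Fin 4 → Fin 4 → Fin 4 → ℝ)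
    (htrace : ∀ c, (∑ a, K a a c) = 0)
    (hanti : ∀ a b c, K a b c + K a c b = 0) :
    ∀ a b c, K a b c =
      (1 / 2) * ∑ ν, ∑ σ, ∑ τ, ∑ l, ∑ r,
        K ν σ τ * ginv l σ * ginv r τ * S a b c l r ν := by
  have hS' : S = palatiniTensor g := by
    ext a b c l r ν
    simp only [hS, palatiniTensor, Matrix.one_apply]
    ring
  have hginv : (Matrix.of ginv)ᵀ * Matrix.of g = 1 := by
    refine Matrix.transpose_mul_eq_one_of_isSymm (Matrix.IsSymm.ext fun i j => hsym j i) ?_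
    ext a c
    simpa [Matrix.mul_apply, Matrix.one_apply] using hinv a c
  intro a b c
  rw [hS']
  simp only [sum_sum_mul_palatiniTensor hginv, sum_mul_palatiniTensor_one htrace hanti]
  ring
end
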